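/- arXiv:2512.15590 — 3 statements merged into one kernel-verified Lean document; each statement's English description precedes it below -/
import Mathlib

section
/- Let k be a field of characteristic zero and n ≥ 1. The derivation δ on the Danielewski surface R = k[x,y,z]/(xⁿy − z² − 1) induced by D(x) = 0, D(y) = 2z, D(z) = xⁿ is locally nilpotent. -/
open MvPolynomial

section Aux

variable {k R : Type*} [CommRing k] [CommRing R] [Algebra k R]

lemma iter_zero (δ : Derivation k R R) (m : ℕ) : (⇑δ)^[m] (0 : R) = 0 :=
  Function.iterate_fixed (map_zero δ) m

lemma iter_add (δ : Derivation k R R) (m : ℕ) (a b : R) :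
    (⇑δ)^[m] (a + b) = (⇑δ)^[m] a + (⇑δ)^[m] b := by
  induction m generalizing a b with
  | zero => simp
  | succ m ih => simp only [Function.iterate_succ_apply, map_add, ih]

lemma iter_mono (δ : Derivation k R R) {m m' : ℕ} (h : m ≤ m') {a : R}
    (ha : (⇑δ)^[m] a = 0) : (⇑δ)^[m'] a = 0 := by
  obtain ⟨c, rfl⟩ := Nat.exists_eq_add_of_le h
  rw [add_comm, Function.iterate_add_apply, ha, iter_zero]

lemma iter_mul_aux (δ : Derivation k R R) :
    ∀ N p q (a b : R), p + q ≤ N → (⇑δ)^[p] a = 0 → (⇑δ)^[q] b = 0 →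
      (⇑δ)^[p + q] (a * b) = 0 := by
  intro N
  induction N with
  | zero =>
    intro p q a b h ha hb
    have hp : p = 0 := by omega
    have hq : q = 0 := by omega
    subst hp; subst hq
    simp only [Function.iterate_zero, id_eq] at ha hb ⊢
    rw [ha, zero_mul]
    exact iter_zero δ _
  | succ N ih =>
    intro p q a b h ha hb
    match p, q with
    | 0, q =>
      simp only [Function.iterate_zero, id_eq] at ha
      rw [ha, zero_mul, iter_zero]
    | p + 1, 0 =>
      simp only [Function.iterate_zero, id_eq] at hb
      rw [hb, mul_zero, iter_zero]
    | p + 1, q + 1 =>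
      have hstep : (⇑δ)^[p + 1 + (q + 1)] (a * b)
          = (⇑δ)^[p + q + 1] (δ a * b) + (⇑δ)^[p + q + 1] (a * δ b) := by
        have : (p + 1) + (q + 1) = (p + q + 1) + 1 := by omega
        rw [this, Function.iterate_succ_apply, Derivation.leibniz, smul_eq_mul,
          smul_eq_mul, iter_add, mul_comm b (δ a), mul_comm a (δ b),
          mul_comm (δ b) a]
        exact add_comm _ _
      rw [hstep]
      have ha' : (⇑δ)^[p] (δ a) = 0 := by
        rwa [← Function.iterate_succ_apply]
      have hb' : (⇑δ)^[q] (δ b) = 0 := by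
        rwa [← Function.iterate_succ_apply]
      have h1 : (⇑δ)^[p + (q + 1)] (δ a * b) = 0 :=
        ih p (q + 1) (δ a) b (by omega) ha' hb
      have h2 : (⇑δ)^[(p + 1) + q] (a * δ b) = 0 :=
        ih (p + 1) q a (δ b) (by omega) ha hb'
      have e1 : p + (q + 1) = p + q + 1 := by omega
      have e2 : (p + 1) + q = p + q + 1 := by omega
      rw [e1] at h1; rw [e2] at h2
      rw [h1, h2, add_zero]

lemma iter_mul (δ : Derivation k R R) {a b : R}
    (ha : ∃ m, (⇑δ)^[m] a = 0) (hb : ∃ m, (⇑δ)^[m] b = 0) :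
    ∃ m, (⇑δ)^[m] (a * b) = 0 := by
  obtain ⟨p, hp⟩ := ha
  obtain ⟨q, hq⟩ := hb
  exact ⟨p + q, iter_mul_aux δ (p + q) p q a b le_rfl hp hq⟩

end Aux

/-- Let `k` be a field of characteristic zero and `n ≥ 1`. On the
Danielewski surface `R = k[x,y,z]/(xⁿy − z² − 1)`, the derivation `δ` induced by
`D(x) = 0`, `D(y) = 2z`, `D(z) = xⁿ` (i.e. any `k`-derivation of `R` taking these
values on the images of the generators) is locally nilpotent. -/
theorem stmt8 (k : Type*) [Field k] [CharZero k] (n : ℕ) (hn : 1 ≤ n)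
    (R : Type*) [CommRing R] [Algebra k R]
    (π : MvPolynomial (Fin 3) k →ₐ[k] R)
    (hπ : Function.Surjective π)
    (hker : RingHom.ker π.toRingHom =
      Ideal.span {(X 0 ^ n * X 1 - X 2 ^ 2 - 1 : MvPolynomial (Fin 3) k)})
    (δ : Derivation k R R)
    (hx : δ (π (X 0)) = 0) (hy : δ (π (X 1)) = 2 * π (X 2))
    (hz : δ (π (X 2)) = π (X 0) ^ n) :
    ∀ a : R, ∃ m : ℕ, (⇑δ)^[m] a = 0 := by
  have hxn : δ (π (X 0) ^ n) = 0 := by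
    rw [Derivation.leibniz_pow, hx, smul_zero, smul_zero]
  have key : ∀ i : Fin 3, ∃ m, (⇑δ)^[m] (π (X i)) = 0 := by
    intro i
    fin_cases i
    · exact ⟨1, hx⟩
    · refine ⟨3, ?_⟩
      show δ (δ (δ (π (X 1)))) = 0
      rw [hy, two_mul, map_add, hz, map_add, hxn, add_zero]
    · refine ⟨2, ?_⟩
      show δ (δ (π (X 2))) = 0
      rw [hz, hxn]
  intro a
  obtain ⟨p, rfl⟩ := hπ a
  induction p using MvPolynomial.induction_on with
  | C c =>
    refine ⟨1, ?_⟩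
    show δ (π (C c)) = 0
    rw [show π (C c) = algebraMap k R c from by
        rw [← MvPolynomial.algebraMap_eq]; exact π.commutes c,
      Derivation.map_algebraMap]
  | add p q hp hq =>
    obtain ⟨mp, hp⟩ := hp
    obtain ⟨mq, hq⟩ := hq
    refine ⟨max mp mq, ?_⟩
    rw [map_add, iter_add, iter_mono δ (le_max_left _ _) hp,
      iter_mono δ (le_max_right _ _) hq, add_zero]
  | mul_X p i hp =>
    rw [map_mul]
    exact iter_mul δ hp (key i)
end

section
/- Let k be a field of characteristic zero, A a commutative k-algebra, and D a locally nilpotent k-derivation of A such that D(x) = 1 for some x ∈ A. Then A = (ker D)[x], i.e., every element a ∈ A can be written as a polynomial in x with coefficients in ker(D), and the map ker(D)[X] → A sending X to x is surjective. -/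
open Polynomial

/-- Slice Theorem: Let `k` be a field of characteristic zero, `A`
a commutative `k`-algebra and `D` a locally nilpotent `k`-derivation of `A` with
`D(x) = 1` for some `x ∈ A`. Then `A = (ker D)[x]`: every `a ∈ A` is the value at
`x` of a polynomial whose coefficients lie in `ker D`, i.e. the evaluation map
`(ker D)[X] → A`, `X ↦ x`, is surjective. -/
theorem stmt12 (k : Type*) [Field k] [CharZero k]
    (A : Type*) [CommRing A] [Algebra k A]
    (D : Derivation k A A) (hLND : ∀ a : A, ∃ n : ℕ, (⇑D)^[n] a = 0)
    (x : A) (hx : D x = 1) :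
    ∀ a : A, ∃ p : Polynomial A, (∀ i : ℕ, D (p.coeff i) = 0) ∧ p.eval x = a := by
  have key : ∀ (i : ℕ) (c : A), (i + 1) • ((1 / ((i : k) + 1)) • c) = c := by
    intro i c
    rw [← Nat.cast_smul_eq_nsmul k, smul_smul]
    have h : ((i : k) + 1) ≠ 0 := by
      exact_mod_cast (Nat.cast_add_one_ne_zero i : ((i : k) + 1) ≠ 0)
    push_cast
    rw [mul_one_div_cancel h, one_smul]
  intro a
  obtain ⟨n, hn⟩ := hLND a
  induction n generalizing a with
  | zero =>
    simp only [Function.iterate_zero, id_eq] at hn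
    exact ⟨0, by simp, by simp [hn]⟩
  | succ n ih =>
    obtain ⟨q, hq, hqe⟩ := ih (D a) (by rwa [← Function.iterate_succ_apply])
    set P : Polynomial A := ∑ i ∈ Finset.range (q.natDegree + 1),
      C ((1 / ((i : k) + 1)) • q.coeff i) * X ^ (i + 1) with hP
    have hPc : ∀ j, D (P.coeff j) = 0 := by
      intro j
      rw [hP, finset_sum_coeff, map_sum]
      refine Finset.sum_eq_zero fun i _ => ?_
      rw [coeff_C_mul, coeff_X_pow]
      split_ifs with h
      · simp [hq]
      · simp
    have hPe : D (P.eval x) = D a := by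
      rw [hP, eval_finset_sum, map_sum]
      have hterm : ∀ i ∈ Finset.range (q.natDegree + 1),
          D ((C ((1 / ((i : k) + 1)) • q.coeff i) * X ^ (i + 1)).eval x)
            = q.coeff i * x ^ i := by
        intro i _
        rw [eval_mul, eval_C, eval_pow, eval_X, Derivation.leibniz,
          Derivation.leibniz_pow, hx, smul_eq_mul, smul_eq_mul, mul_one]
        rw [Derivation.map_smul, hq, smul_zero, smul_zero, add_zero]
        rw [Nat.add_sub_cancel]
        rw [smul_mul_assoc, mul_smul_comm, smul_comm, key]
      rw [Finset.sum_congr rfl hterm, ← eval_eq_sum_range, hqe]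
    refine ⟨C (a - P.eval x) + P, ?_, by simp⟩
    intro j
    rw [coeff_add, map_add, hPc, add_zero, coeff_C]
    split_ifs with h
    · rw [map_sub, hPe, sub_self]
    · simp
end

section
/- Let k be a field of characteristic zero, A a commutative k-algebra, and D a locally nilpotent derivation with a slice x (D(x) = 1). Then the map π : A → A given by π(a) = Σ_{i≥0} ((−1)ⁱ/i!)·xⁱ·Dⁱ(a) (a finite sum by local nilpotence) is a ring homomorphism with image contained in ker(D) and π restricted to ker(D) is the identity. -/
/-!
The polynomial `E a = ∑ Dⁱ a / i! • Tⁱ ∈ A[T]`, a truncation of `exp (T D) a`, is multiplicative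
in `a` by the Leibniz rule, and `π a` is its evaluation at `T = -x`; so `π` is a ring
homomorphism. Since `D (Dⁱ a / i!) = (i + 1) • Dⁱ⁺¹ a / (i + 1)!` and `D (-x) = -1`, applying `D`
to `∑ Dⁱ a / i! • (-x)ⁱ` telescopes to `0`.
-/

open Finset Polynomial
open scoped Nat

theorem Function.iterate_eq_zero_of_le {M : Type*} [Zero M] {f : M → M} (hf : f 0 = 0) {a : M}
    {m n : ℕ} (hm : f^[m] a = 0) (hmn : m ≤ n) : f^[n] a = 0 := by
  rw [← Nat.sub_add_cancel hmn, Function.iterate_add_apply, hm, Function.iterate_fixed hf]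

namespace Derivation

theorem iterate_leibniz {R A : Type*} [CommSemiring R] [CommSemiring A] [Algebra R A]
    (D : Derivation R A A) (n : ℕ) (a b : A) :
    (⇑D)^[n] (a * b) = ∑ ij ∈ antidiagonal n, n.choose ij.1 • ((⇑D)^[ij.1] a * (⇑D)^[ij.2] b) := by
  induction n with
  | zero => simp
  | succ n ih =>
    rw [sum_antidiagonal_choose_succ_nsmul (fun i j => (⇑D)^[i] a * (⇑D)^[j] b) n,
      ← sum_add_distrib, Function.iterate_succ_apply', ih, map_sum]
    refine sum_congr rfl fun ij hij => ?_
    rw [map_nsmul, leibniz, n.choose_symm_of_eq_add (mem_antidiagonal.1 hij).symm,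
      Function.iterate_succ_apply', Function.iterate_succ_apply', smul_eq_mul, smul_eq_mul,
      mul_comm (D _), ← smul_add]

variable {k A : Type*} [Field k] [CommRing A] [Algebra k A]
  (D : Derivation k A A)

def expCoeff (i : ℕ) (a : A) : A :=
  (i ! : k)⁻¹ • (⇑D)^[i] a

theorem expCoeff_add (i : ℕ) (a b : A) :
    D.expCoeff i (a + b) = D.expCoeff i a + D.expCoeff i b := by
  rw [expCoeff, iterate_map_add, smul_add, expCoeff, expCoeff]

theorem expCoeff_eq_zero_of_le {N i : ℕ} {a : A} (h : (⇑D)^[N] a = 0) (hi : N ≤ i) :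
    D.expCoeff i a = 0 := by
  rw [expCoeff, Function.iterate_eq_zero_of_le (map_zero D) h hi, smul_zero]

theorem expCoeff_mul [CharZero k] (n : ℕ) (a b : A) :
    D.expCoeff n (a * b) = ∑ ij ∈ antidiagonal n, D.expCoeff ij.1 a * D.expCoeff ij.2 b := by
  rw [expCoeff, iterate_leibniz, smul_sum]
  refine sum_congr rfl fun ij hij => ?_
  obtain rfl := mem_antidiagonal.1 hij
  rw [expCoeff, expCoeff, smul_mul_smul_comm, ← Nat.cast_smul_eq_nsmul k, smul_smul,
    Nat.cast_add_choose, mul_div, inv_mul_cancel₀ (Nat.cast_ne_zero.2 (Nat.factorial_ne_zero _)),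
    one_div, mul_inv]

theorem apply_expCoeff [CharZero k] (i : ℕ) (a : A) :
    D (D.expCoeff i a) = (i + 1 : k) • D.expCoeff (i + 1) a := by
  rw [expCoeff, expCoeff, map_smul, smul_smul, Nat.factorial_succ, Nat.cast_mul, mul_inv,
    ← mul_assoc, Nat.cast_add_one, mul_inv_cancel₀ (Nat.cast_add_one_ne_zero i), one_mul,
    Function.iterate_succ_apply']

noncomputable def expPoly (N : ℕ) (a : A) : A[X] :=
  ∑ i ∈ range N, monomial i (D.expCoeff i a)

theorem coeff_expPoly {N : ℕ} {a : A} (h : (⇑D)^[N] a = 0) (i : ℕ) :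
    (D.expPoly N a).coeff i = D.expCoeff i a := by
  simp only [expPoly, finsetSum_coeff, coeff_monomial, sum_ite_eq', mem_range, ite_eq_left_iff,
    not_lt]
  exact fun hi => (D.expCoeff_eq_zero_of_le h hi).symm

theorem expPoly_one (a : A) : D.expPoly 1 a = C a := by
  simp [expPoly, expCoeff]

theorem eval_expPoly (N : ℕ) (a y : A) :
    (D.expPoly N a).eval y = ∑ i ∈ range N, D.expCoeff i a * y ^ i := by
  simp only [expPoly, eval_finsetSum, eval_monomial]

theorem expPoly_eq_expPoly {M N : ℕ} {a : A} (hM : (⇑D)^[M] a = 0) (hN : (⇑D)^[N] a = 0) :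
    D.expPoly M a = D.expPoly N a :=
  Polynomial.ext fun i => by rw [D.coeff_expPoly hM, D.coeff_expPoly hN]

theorem expPoly_add {M N L : ℕ} {a b : A} (ha : (⇑D)^[M] a = 0) (hb : (⇑D)^[N] b = 0)
    (hab : (⇑D)^[L] (a + b) = 0) : D.expPoly L (a + b) = D.expPoly M a + D.expPoly N b :=
  Polynomial.ext fun i => by
    rw [coeff_add, D.coeff_expPoly hab, D.coeff_expPoly ha, D.coeff_expPoly hb, expCoeff_add]

theorem expPoly_mul [CharZero k] {M N L : ℕ} {a b : A} (ha : (⇑D)^[M] a = 0)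
    (hb : (⇑D)^[N] b = 0) (hab : (⇑D)^[L] (a * b) = 0) :
    D.expPoly L (a * b) = D.expPoly M a * D.expPoly N b :=
  Polynomial.ext fun n => by
    simp only [coeff_mul, D.coeff_expPoly hab, D.coeff_expPoly ha, D.coeff_expPoly hb,
      expCoeff_mul]

theorem apply_sum_expCoeff_mul_pow [CharZero k] {y : A} (hy : D y = -1) (a : A) (n : ℕ) :
    D (∑ i ∈ range (n + 1), D.expCoeff i a * y ^ i) =
      (n + 1 : k) • (D.expCoeff (n + 1) a * y ^ n) := by
  induction n with
  | zero => simp [apply_expCoeff]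
  | succ n ih =>
    rw [sum_range_succ, map_add, ih, leibniz, leibniz_pow, apply_expCoeff, hy, Nat.add_sub_cancel,
      ← Nat.cast_smul_eq_nsmul k]
    simp only [smul_eq_mul, Algebra.smul_def, map_add, map_one, Nat.cast_add, Nat.cast_one]
    ring

theorem apply_eval_expPoly [CharZero k] {y : A} (hy : D y = -1) {N : ℕ} {a : A}
    (h : (⇑D)^[N] a = 0) : D ((D.expPoly N a).eval y) = 0 := by
  have h' : (⇑D)^[N + 1] a = 0 := Function.iterate_eq_zero_of_le (map_zero D) h N.le_succ
  rw [D.expPoly_eq_expPoly h h', eval_expPoly, apply_sum_expCoeff_mul_pow D hy,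
    D.expCoeff_eq_zero_of_le h' le_rfl, zero_mul, smul_zero]

end Derivation

/-- Dixmier map: Let `k` be a field of characteristic zero, `A` a
commutative `k`-algebra, `D` a locally nilpotent derivation with a slice `x`
(`D x = 1`). The map `π(a) = Σ_{i} ((−1)ⁱ/i!)·xⁱ·Dⁱ(a)` (a finite sum by local
nilpotence) is a ring homomorphism with image in `ker D`, and `π` is the
identity on `ker D`. -/
theorem stmt13 (k : Type*) [Field k] [CharZero k]
    (A : Type*) [CommRing A] [Algebra k A]
    (D : Derivation k A A) (hLND : ∀ a : A, ∃ n : ℕ, (⇑D)^[n] a = 0)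
    (x : A) (hx : D x = 1)
    (π : A → A)
    (hπ : ∀ (a : A) (N : ℕ), (⇑D)^[N] a = 0 →
      π a = ∑ i ∈ Finset.range N,
        (((-1 : k) ^ i / (i.factorial : k)) • (x ^ i * (⇑D)^[i] a))) :
    (∀ a b : A, π (a * b) = π a * π b) ∧
    (∀ a b : A, π (a + b) = π a + π b) ∧
    π 1 = 1 ∧
    (∀ a : A, D (π a) = 0) ∧
    (∀ a : A, D a = 0 → π a = a) := by
  have hπ_eval : ∀ (a : A) (N : ℕ), (⇑D)^[N] a = 0 → π a = (D.expPoly N a).eval (-x) := by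
    intro a N h
    rw [hπ a N h, D.eval_expPoly]
    refine sum_congr rfl fun i _ => ?_
    rw [Derivation.expCoeff, neg_pow x, div_eq_mul_inv, Algebra.smul_def, Algebra.smul_def]
    simp only [map_mul, map_pow, map_neg, map_one]
    ring
  have hπ_ker : ∀ a : A, D a = 0 → π a = a := fun a ha => by
    rw [hπ_eval a 1 ha, D.expPoly_one, eval_C]
  refine ⟨fun a b => ?_, fun a b => ?_, hπ_ker 1 D.map_one_eq_zero, fun a => ?_, hπ_ker⟩
  · obtain ⟨M, hM⟩ := hLND a
    obtain ⟨N, hN⟩ := hLND b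
    obtain ⟨L, hL⟩ := hLND (a * b)
    rw [hπ_eval _ _ hL, hπ_eval _ _ hM, hπ_eval _ _ hN, D.expPoly_mul hM hN hL, eval_mul]
  · obtain ⟨M, hM⟩ := hLND a
    obtain ⟨N, hN⟩ := hLND b
    obtain ⟨L, hL⟩ := hLND (a + b)
    rw [hπ_eval _ _ hL, hπ_eval _ _ hM, hπ_eval _ _ hN, D.expPoly_add hM hN hL, eval_add]
  · obtain ⟨N, hN⟩ := hLND a
    rw [hπ_eval a N hN]
    exact D.apply_eval_expPoly (by rw [map_neg, hx]) hN
end
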